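/- For any Gaussian measure μ on field configurations with covariance kernel K satisfying 0 ≤ K_{x,y} ≤ c₁ e^{−2|x−y|}, and any points x1,…,xn ∈ R^d with pairwise distances greater than 1, and nonnegative integers s1,…,sn with Σ s_j = 2s even, the moment bound |E_μ[Π_{j=1}^n φ(x_j)^{s_j}]| ≤ c^s Π_{j=1}^n (s_j!)^{1/2} holds for some constant c depending only on c₁ and d. -/

import Mathlib

/-!
Gaussian integration by parts removes one factor `φ(x_{j₀})` of the monomial and pairs it with
each remaining factor `φ(x_j)`, so the moment with exponents `s` is a sum over `j` of
`t_j K(x_{j₀}, x_j)` times a moment of degree two less, where `t = s - e_{j₀}`. Choosing `j₀`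
with `s_{j₀}` maximal gives `t_j ≤ √(t_j s_{j₀})`, and `√(t_j s_{j₀})` is exactly the ratio of
`∏ₖ √(sₖ!)` to the same product for `t - e_j`. Hence by induction the moment is at most
`c^m ∏ₖ √(sₖ!)` as soon as every row sum `∑_j K(x_{j₀}, x_j)` is at most `c`.

The row sums are bounded uniformly because the points are `1`-separated: the balls
`B(x_j, 1/2)` are disjoint and `e^{-2|y₀ - x_j|} ≤ e · e^{-2|y₀ - y|}` on `B(x_j, 1/2)`, so
`∑_j e^{-2|y₀ - x_j|} ≤ e ∫ e^{-2|y|} dy / |B(0, 1/2)|`.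
-/

open MeasureTheory Finset Real

noncomputable def sqrtFactorialProd {ι : Type*} [Fintype ι] (s : ι → ℕ) : ℝ :=
  ∏ j, √(Nat.factorial (s j))

theorem sqrtFactorialProd_nonneg {ι : Type*} [Fintype ι] (s : ι → ℕ) : 0 ≤ sqrtFactorialProd s :=
  prod_nonneg fun _ _ => sqrt_nonneg _

section AddSingle

variable {ι M : Type*} [DecidableEq ι]

theorem sub_single_one_add_single_one {t : ι → ℕ} {i : ι} (h : 0 < t i) :
    t - Pi.single i 1 + Pi.single i 1 = t := by
  ext j
  rcases eq_or_ne j i with rfl | hj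
  · simp only [Pi.add_apply, Pi.sub_apply, Pi.single_eq_same]
    omega
  · simp [hj]

variable [Fintype ι]

theorem sum_add_single_one (t : ι → ℕ) (i : ι) :
    ∑ j, (t + Pi.single i 1 : ι → ℕ) j = ∑ j, t j + 1 := by
  simp [sum_add_distrib]

theorem prod_apply_add_single_one [CommMonoid M] (g : ι → ℕ → M) (t : ι → ℕ) (i : ι) :
    ∏ j, g j ((t + Pi.single i 1 : ι → ℕ) j) = g i (t i + 1) * ∏ j ∈ univ.erase i, g j (t j) := by
  rw [← mul_prod_erase univ _ (mem_univ i)]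
  simp only [Pi.add_apply, Pi.single_eq_same]
  congr 1
  exact prod_congr rfl fun j hj => by rw [Pi.single_eq_of_ne (ne_of_mem_erase hj), add_zero]

theorem prod_pow_add_single_one [CommMonoid M] (f : ι → M) (t : ι → ℕ) (i : ι) :
    ∏ j, f j ^ (t + Pi.single i 1 : ι → ℕ) j = f i * ∏ j, f j ^ t j := by
  rw [prod_apply_add_single_one (fun j k => f j ^ k), ← mul_prod_erase univ _ (mem_univ i),
    pow_succ, mul_comm (f i ^ t i), mul_assoc]

theorem sqrtFactorialProd_add_single_one (t : ι → ℕ) (i : ι) :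
    sqrtFactorialProd (t + Pi.single i 1) = √(t i + 1) * sqrtFactorialProd t := by
  rw [sqrtFactorialProd, sqrtFactorialProd, prod_apply_add_single_one (fun _ k => √k.factorial),
    ← mul_prod_erase univ _ (mem_univ i), Nat.factorial_succ, Nat.cast_mul,
    sqrt_mul (by positivity), mul_assoc]
  push_cast
  rfl

theorem cast_mul_sqrtFactorialProd_sub_single_le {t : ι → ℕ} {i j : ι}
    (h : (t + Pi.single j 1 : ι → ℕ) i ≤ (t + Pi.single j 1 : ι → ℕ) j) :
    t i * sqrtFactorialProd (t - Pi.single i 1) ≤ sqrtFactorialProd (t + Pi.single j 1) := by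
  rcases Nat.eq_zero_or_pos (t i) with hti | hti
  · rw [hti, Nat.cast_zero, zero_mul]
    exact sqrtFactorialProd_nonneg _
  set u := t - Pi.single i 1
  have hut : u + Pi.single i 1 = t := sub_single_one_add_single_one hti
  have hti_eq : t i = u i + 1 := by rw [← hut, Pi.add_apply, Pi.single_eq_same]
  have htj : t i ≤ t j + 1 := (Nat.le_add_right _ _).trans (h.trans_eq (by simp))
  have hft : sqrtFactorialProd t = √(u i + 1) * sqrtFactorialProd u := by
    rw [← sqrtFactorialProd_add_single_one, hut]
  rw [sqrtFactorialProd_add_single_one, hft, ← mul_assoc]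
  refine mul_le_mul_of_nonneg_right ?_ (sqrtFactorialProd_nonneg u)
  calc (t i : ℝ) = √(t i) * √(t i) := (mul_self_sqrt (Nat.cast_nonneg _)).symm
    _ ≤ √(t j + 1) * √(u i + 1) := by
        rw [hti_eq]; push_cast; gcongr; omega

end AddSingle

section Fibres

variable {ι κ M : Type*} [DecidableEq κ]

@[to_additive]
theorem prod_comp_eq_prod_pow_card_fiber [Fintype κ] [CommMonoid M] (A : Finset ι) (w : ι → κ)
    (g : κ → M) : ∏ i ∈ A, g (w i) = ∏ j, g j ^ #{i ∈ A | w i = j} := by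
  rw [← prod_fiberwise_of_maps_to (fun i _ => mem_univ (w i))]
  refine prod_congr rfl fun j _ => ?_
  rw [prod_congr rfl fun i hi => by rw [(mem_filter.1 hi).2], prod_const]

theorem card_fiber_erase [DecidableEq ι] (A : Finset ι) (w : ι → κ) {i : ι} (hi : i ∈ A)
    (j : κ) :
    #{i' ∈ A.erase i | w i' = j} = #{i' ∈ A | w i' = j} - (Pi.single (w i) 1 : κ → ℕ) j := by
  rw [filter_erase, card_erase_eq_ite]
  by_cases h : w i = j
  · subst h; simp [hi]
  · simp [h, Ne.symm h]

theorem exists_card_fiber_eq {n : ℕ} (t : Fin n → ℕ) :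
    ∃ z : Fin (∑ j, t j) → Fin n, ∀ j, #{i | z i = j} = t j := by
  refine ⟨fun i => (finSigmaFinEquiv.symm i).1, fun j => ?_⟩
  rw [← Fintype.card_subtype, ← Fintype.card_fin (t j)]
  exact Fintype.card_congr ((finSigmaFinEquiv.symm.subtypeEquiv fun _ => Iff.rfl).trans
    (Equiv.sigmaSubtype j))

end Fibres

section Moments

variable {E : Type*} {n : ℕ} (μ : Measure (E → ℝ)) (K : E → E → ℝ)

/-- Gaussian integration by parts `E[φ(z₀) F] = ∑ᵢ K(z₀, zᵢ) E[∂F/∂φ(zᵢ)]` on the monomials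
`F = ∏ᵢ φ(zᵢ)`. -/
def IsWickRecursive : Prop :=
  ∀ (N : ℕ) (z : Fin (N + 1) → E), ∫ φ, ∏ i, φ (z i) ∂μ =
    ∑ i : Fin N, K (z 0) (z i.succ) * ∫ φ, ∏ i' ∈ univ.erase i, φ (z i'.succ) ∂μ

noncomputable def monomialMoment (x : Fin n → E) (s : Fin n → ℕ) : ℝ :=
  ∫ φ, ∏ j, φ (x j) ^ s j ∂μ

variable {μ K}

theorem IsWickRecursive.monomialMoment_add_single (hμ : IsWickRecursive μ K) (x : Fin n → E)
    (t : Fin n → ℕ) (j₀ : Fin n) :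
    monomialMoment μ x (t + Pi.single j₀ 1) =
      ∑ j, t j * K (x j₀) (x j) * monomialMoment μ x (t - Pi.single j 1) := by
  -- `z` lists the factors of the monomial `∏ⱼ φ(xⱼ)^{tⱼ}`, the index `j` occurring `t j` times
  obtain ⟨z, hz⟩ := exists_card_fiber_eq t
  have hwick := hμ _ fun i => x ((Fin.cons j₀ z : Fin (_ + 1) → Fin n) i)
  simp only [Fin.cons_zero, Fin.cons_succ] at hwick
  have hlhs : monomialMoment μ x (t + Pi.single j₀ 1) =
      ∫ φ, ∏ i, φ (x ((Fin.cons j₀ z : Fin (_ + 1) → Fin n) i)) ∂μ := by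
    refine integral_congr_ae (ae_of_all _ fun φ => ?_)
    simp only [Fin.prod_univ_succ, Fin.cons_zero, Fin.cons_succ, prod_pow_add_single_one,
      prod_comp_eq_prod_pow_card_fiber _ z (fun j => φ (x j)), hz]
  have herase : ∀ i, ∫ φ, ∏ i' ∈ univ.erase i, φ (x (z i')) ∂μ =
      monomialMoment μ x (t - Pi.single (z i) 1) := by
    intro i
    refine integral_congr_ae (ae_of_all _ fun φ => ?_)
    simp only [prod_comp_eq_prod_pow_card_fiber _ z (fun j => φ (x j)),
      card_fiber_erase _ z (mem_univ i), hz]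
    rfl
  have hgroup := sum_comp_eq_sum_nsmul_card_fiber univ z
    fun j => K (x j₀) (x j) * monomialMoment μ x (t - Pi.single j 1)
  rw [hlhs, hwick, sum_congr rfl fun i _ => by rw [herase i], hgroup]
  simp only [hz, nsmul_eq_mul, mul_assoc]

theorem cast_mul_abs_monomialMoment_sub_single_le {x : Fin n → E} {c : ℝ} (hc : 0 ≤ c)
    {m : ℕ} (hm : ∀ u : Fin n → ℕ, ∑ j, u j = 2 * m →
      |monomialMoment μ x u| ≤ c ^ m * sqrtFactorialProd u)
    {t : Fin n → ℕ} (ht : ∑ j, t j = 2 * m + 1) {j j₀ : Fin n}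
    (hmax : (t + Pi.single j₀ 1 : Fin n → ℕ) j ≤ (t + Pi.single j₀ 1 : Fin n → ℕ) j₀) :
    t j * |monomialMoment μ x (t - Pi.single j 1)| ≤
      c ^ m * sqrtFactorialProd (t + Pi.single j₀ 1) := by
  rcases Nat.eq_zero_or_pos (t j) with htj | htj
  · rw [htj, Nat.cast_zero, zero_mul]
    exact mul_nonneg (pow_nonneg hc m) (sqrtFactorialProd_nonneg _)
  have hsum : ∑ k, (t - Pi.single j 1 : Fin n → ℕ) k = 2 * m := by
    have := sum_add_single_one (t - Pi.single j 1) j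
    rw [sub_single_one_add_single_one htj] at this
    omega
  calc t j * |monomialMoment μ x (t - Pi.single j 1)|
      ≤ t j * (c ^ m * sqrtFactorialProd (t - Pi.single j 1)) := by gcongr; exact hm _ hsum
    _ = c ^ m * (t j * sqrtFactorialProd (t - Pi.single j 1)) := by ring
    _ ≤ c ^ m * sqrtFactorialProd (t + Pi.single j₀ 1) := by
        gcongr; exact cast_mul_sqrtFactorialProd_sub_single_le hmax

theorem IsWickRecursive.abs_monomialMoment_le [IsProbabilityMeasure μ]
    (hμ : IsWickRecursive μ K) (hK : ∀ y y', 0 ≤ K y y') (x : Fin n → E) {c : ℝ}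
    (hc : ∀ j₀, ∑ j, K (x j₀) (x j) ≤ c)
    (m : ℕ) (s : Fin n → ℕ) (hs : ∑ j, s j = 2 * m) :
    |monomialMoment μ x s| ≤ c ^ m * sqrtFactorialProd s := by
  induction m generalizing s with
  | zero =>
    obtain rfl : s = 0 := funext fun j => sum_eq_zero_iff.1 hs j (mem_univ j)
    simp [monomialMoment, sqrtFactorialProd]
  | succ m ih =>
    have : Nonempty (Fin n) := by
      by_contra h
      simp [not_nonempty_iff.1 h] at hs
    obtain ⟨j₀, hj₀⟩ := Finite.exists_max s
    have hs₀ : 0 < s j₀ := by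
      by_contra! h
      have : ∑ j, s j = 0 := sum_eq_zero fun j _ => by have := hj₀ j; omega
      omega
    set t := s - Pi.single j₀ 1
    have hts : t + Pi.single j₀ 1 = s := sub_single_one_add_single_one hs₀
    have ht : ∑ j, t j = 2 * m + 1 := by
      have := sum_add_single_one t j₀
      rw [hts] at this
      omega
    have hc0 : 0 ≤ c := (sum_nonneg fun j _ => hK _ _).trans (hc j₀)
    have hterm : ∀ j, |t j * K (x j₀) (x j) * monomialMoment μ x (t - Pi.single j 1)| ≤
        K (x j₀) (x j) * (c ^ m * sqrtFactorialProd s) := fun j => by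
      rw [abs_mul, abs_mul, abs_of_nonneg (hK _ _), Nat.abs_cast, mul_comm (t j : ℝ), mul_assoc]
      refine mul_le_mul_of_nonneg_left ?_ (hK _ _)
      rw [← hts]
      exact cast_mul_abs_monomialMoment_sub_single_le hc0 ih ht (by rw [hts]; exact hj₀ j)
    calc |monomialMoment μ x s|
          = |∑ j, t j * K (x j₀) (x j) * monomialMoment μ x (t - Pi.single j 1)| := by
          rw [← hts, hμ.monomialMoment_add_single]
      _ ≤ ∑ j, K (x j₀) (x j) * (c ^ m * sqrtFactorialProd s) :=
          (abs_sum_le_sum_abs _ _).trans (sum_le_sum fun j _ => hterm j)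
      _ ≤ c ^ (m + 1) * sqrtFactorialProd s := by
          rw [← sum_mul, pow_succ', mul_assoc]
          exact mul_le_mul_of_nonneg_right (hc j₀)
            (mul_nonneg (pow_nonneg hc0 m) (sqrtFactorialProd_nonneg s))

end Moments

section Packing

variable {E : Type*} [NormedAddCommGroup E] [NormedSpace ℝ E] [FiniteDimensional ℝ E]
  [MeasurableSpace E] (μ : Measure E) [μ.IsAddHaarMeasure]

theorem measureReal_ball_pos (y : E) {r : ℝ} (hr : 0 < r) : 0 < μ.real (Metric.ball y r) :=
  ENNReal.toReal_pos (Metric.measure_ball_pos μ y hr).ne' measure_ball_lt_top.ne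

variable [BorelSpace E]

theorem integrable_exp_neg_mul_norm {b : ℝ} (hb : 0 < b) :
    Integrable (fun y => exp (-b * ‖y‖)) μ := by
  set k := μ.integrablePower
  have hdecay : ∀ y : E, ‖y‖ ^ (0 + k) * ‖exp (-b * ‖y‖)‖ ≤ k.factorial / b ^ k := by
    intro y
    have := pow_div_factorial_le_exp _ (mul_nonneg hb.le (norm_nonneg y)) k
    rw [div_le_iff₀ (by positivity), mul_pow] at this
    rw [zero_add, norm_of_nonneg (exp_pos _).le, le_div_iff₀ (by positivity), neg_mul, exp_neg]
    calc _ = b ^ k * ‖y‖ ^ k * (exp (b * ‖y‖))⁻¹ := by ring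
      _ ≤ exp (b * ‖y‖) * k.factorial * (exp (b * ‖y‖))⁻¹ := by gcongr
      _ = k.factorial := by field_simp
  have hle_one : ∀ y : E, ‖exp (-b * ‖y‖)‖ ≤ 1 := fun y => by
    rw [norm_of_nonneg (exp_pos _).le, exp_le_one_iff]
    nlinarith [norm_nonneg y]
  simpa using integrable_of_le_of_pow_mul_le (k := 0) hle_one hdecay (by fun_prop)

noncomputable def packingConst : ℝ :=
  exp 1 * (∫ y, exp (-2 * ‖y‖) ∂μ) / μ.real (Metric.ball 0 (1 / 2))

theorem packingConst_pos : 0 < packingConst μ := by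
  have := integral_exp_pos (f := fun y => -2 * ‖y‖) (integrable_exp_neg_mul_norm μ two_pos)
  have := measureReal_ball_pos μ (0 : E) one_half_pos
  unfold packingConst
  positivity

theorem sum_exp_neg_two_dist_le_packingConst {ι : Type*} [Fintype ι] (x : ι → E)
    (hx : Pairwise fun j j' => 1 < dist (x j) (x j')) (y₀ : E) :
    ∑ j, exp (-2 * dist y₀ (x j)) ≤ packingConst μ := by
  have hdist : (fun y => exp (-2 * dist y₀ y)) = fun y => exp (-2 * ‖y - y₀‖) := by
    ext y; rw [dist_comm, dist_eq_norm]
  have hf : Integrable (fun y => exp 1 * exp (-2 * dist y₀ y)) μ := by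
    refine Integrable.const_mul ?_ _
    rw [hdist]; exact (integrable_exp_neg_mul_norm μ two_pos).comp_sub_right y₀
  have hball : ∀ j, exp (-2 * dist y₀ (x j)) * μ.real (Metric.ball 0 (1 / 2)) ≤
      ∫ y in Metric.ball (x j) (1 / 2), exp 1 * exp (-2 * dist y₀ y) ∂μ := by
    intro j
    rw [mul_comm, measureReal_def, ← Measure.addHaar_ball_center μ (x j), ← measureReal_def,
      ← smul_eq_mul, ← setIntegral_const]
    refine setIntegral_mono_on (integrableOn_const measure_ball_lt_top.ne) hf.integrableOn
      measurableSet_ball fun y hy => ?_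
    rw [← exp_add, exp_le_exp]
    linarith [dist_triangle y₀ (x j) y, Metric.mem_ball'.1 hy]
  have hdisj : (↑(univ : Finset ι) : Set ι).Pairwise
      (Function.onFun Disjoint fun j => Metric.ball (x j) (1 / 2)) :=
    fun j _ j' _ hjj' => Metric.ball_disjoint_ball (by linarith [hx hjj'])
  have hunion : ∑ j, ∫ y in Metric.ball (x j) (1 / 2), exp 1 * exp (-2 * dist y₀ y) ∂μ ≤
      exp 1 * ∫ y, exp (-2 * ‖y‖) ∂μ := by
    rw [← integral_biUnion_finset _ (fun j _ => measurableSet_ball) hdisj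
      fun j _ => hf.integrableOn]
    calc _ ≤ ∫ y, exp 1 * exp (-2 * dist y₀ y) ∂μ :=
          setIntegral_le_integral hf (ae_of_all _ fun y => by positivity)
      _ = _ := by
          rw [integral_const_mul, hdist, integral_sub_right_eq_self (fun y => exp (-2 * ‖y‖)) y₀]
  rw [packingConst, le_div_iff₀ (measureReal_ball_pos μ 0 one_half_pos), sum_mul]
  exact (sum_le_sum fun j _ => hball j).trans hunion

end Packing

/-- Gaussian moment bound: for any centered Gaussian measure `μ` on field configurations
(encoded by the probability normalization, the Wick/integration-by-parts recursion for
its moments with covariance kernel `K`, and integrability of all monomials), with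
`0 ≤ K_{x,y} ≤ c₁ e^{−2|x−y|}`, points `x₁,…,xₙ` with pairwise distances `> 1`, and
exponents `s₁,…,sₙ` with `Σ sⱼ = 2s` even, one has
`|E_μ[∏ φ(xⱼ)^{sⱼ}]| ≤ c^s ∏ (sⱼ!)^{1/2}` with `c` depending only on `c₁` and `d`. -/
theorem gaussian_moment_bound (d : ℕ) (c₁ : ℝ) (hc₁ : 0 < c₁) :
    ∃ c : ℝ, 0 < c ∧
      ∀ (μ : Measure ((EuclideanSpace ℝ (Fin d)) → ℝ)), IsProbabilityMeasure μ →
      ∀ K : EuclideanSpace ℝ (Fin d) → EuclideanSpace ℝ (Fin d) → ℝ,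
      (∀ x y, 0 ≤ K x y ∧ K x y ≤ c₁ * Real.exp (-2 * dist x y)) →
      (∀ (N : ℕ) (z : Fin N → EuclideanSpace ℝ (Fin d)),
        Integrable (fun φ : (EuclideanSpace ℝ (Fin d)) → ℝ => ∏ i, φ (z i)) μ) →
      (∀ (N : ℕ) (z : Fin (N + 1) → EuclideanSpace ℝ (Fin d)),
        (∫ φ : (EuclideanSpace ℝ (Fin d)) → ℝ, ∏ i, φ (z i) ∂μ)
          = ∑ i : Fin N, K (z 0) (z i.succ) *
              ∫ φ : (EuclideanSpace ℝ (Fin d)) → ℝ,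
                ∏ i' ∈ Finset.univ.erase i, φ (z i'.succ) ∂μ) →
      ∀ (n : ℕ) (x : Fin n → EuclideanSpace ℝ (Fin d)),
      (∀ j j', j ≠ j' → 1 < dist (x j) (x j')) →
      ∀ (s : Fin n → ℕ) (m : ℕ), (∑ j, s j) = 2 * m →
      |∫ φ : (EuclideanSpace ℝ (Fin d)) → ℝ, ∏ j, (φ (x j)) ^ (s j) ∂μ|
        ≤ c ^ m * ∏ j, Real.sqrt (Nat.factorial (s j)) := by
  set C := packingConst (volume : Measure (EuclideanSpace ℝ (Fin d)))
  refine ⟨c₁ * C, mul_pos hc₁ (packingConst_pos _), ?_⟩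
  intro μ _ K hK _ hwick n x hsep s m hs
  have hrow : ∀ j₀, ∑ j, K (x j₀) (x j) ≤ c₁ * C := fun j₀ =>
    calc ∑ j, K (x j₀) (x j) ≤ ∑ j, c₁ * exp (-2 * dist (x j₀) (x j)) :=
          sum_le_sum fun j _ => (hK _ _).2
      _ ≤ c₁ * C := by
          rw [← mul_sum]
          gcongr
          exact sum_exp_neg_two_dist_le_packingConst volume x hsep (x j₀)
  exact IsWickRecursive.abs_monomialMoment_le hwick (fun y y' => (hK y y').1) x hrow m s hs
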